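/- Suppose each good agent a has an ID list L(a) ⊆ ℕ that contains the IDs of all good agents, and define its estimate e(a) = max{y : (4y+4)(y+1) ≤ |L(a)|}. An agent a becomes a target agent iff its own ID is among the e(a)+1 smallest IDs in L(a). Then: (1) the good agent with the smallest ID among good agents is a target agent, and (2) letting E = max over good agents of e(a), at most E+1 good agents are target agents. -/
import Mathlib


/-- The Byzantine-count estimate computed from an ID list of size `m`. -/
noncomputable def estimateF (m : ℕ) : ℕ := sSup {y : ℕ | (4 * y + 4) * (y + 1) ≤ m}

lemma estimateF_ge {m f : ℕ} (h : (4 * f + 4) * (f + 1) ≤ m) : f ≤ estimateF m := by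
  apply le_csSup
  · refine ⟨m, fun y hy => ?_⟩
    calc y ≤ (4 * y + 4) * (y + 1) := by nlinarith
    _ ≤ m := hy
  · exact h

theorem target_agents (f : ℕ) (Good : Finset ℕ) (hne : Good.Nonempty)
    (L : ℕ → Finset ℕ)
    (hGc : (4 * f + 4) * (f + 1) ≤ Good.card)
    (hsub : ∀ a ∈ Good, Good ⊆ L a)
    (hByz : ∀ a ∈ Good, ((L a) \ Good).card ≤ f) :
    -- (1) the smallest good ID is among the `estimateF |L a| + 1` smallest IDs of its list
    ((L (Good.min' hne)).filter (fun b => b < Good.min' hne)).card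
        ≤ estimateF (L (Good.min' hne)).card ∧
    -- (2) at most `E + 1` good agents are target agents, where `E` is the max estimate
    (Good.filter (fun a =>
        ((L a).filter (fun b => b < a)).card ≤ estimateF (L a).card)).card
      ≤ (Good.sup fun a => estimateF (L a).card) + 1 := by
  have hest : ∀ a ∈ Good, f ≤ estimateF (L a).card := by
    intro a ha
    exact estimateF_ge (le_trans hGc (Finset.card_le_card (hsub a ha)))
  constructor
  · -- Part (1)
    set a := Good.min' hne with ha
    have haG : a ∈ Good := Good.min'_mem hne
    have hsubset : (L a).filter (fun b => b < a) ⊆ (L a) \ Good := by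
      intro b hb
      simp only [Finset.mem_filter] at hb
      simp only [Finset.mem_sdiff]
      refine ⟨hb.1, fun hbG => ?_⟩
      exact absurd (Good.min'_le b hbG) (by omega)
    calc ((L a).filter (fun b => b < a)).card ≤ ((L a) \ Good).card :=
          Finset.card_le_card hsubset
      _ ≤ f := hByz a haG
      _ ≤ estimateF (L a).card := hest a haG
  · -- Part (2)
    set E := Good.sup fun a => estimateF (L a).card with hE
    set T := Good.filter (fun a =>
        ((L a).filter (fun b => b < a)).card ≤ estimateF (L a).card) with hT
    by_contra hcon
    push_neg at hcon
    have hTne : T.Nonempty := Finset.card_pos.mp (by omega)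
    set t := T.max' hTne with ht
    have htT : t ∈ T := T.max'_mem hTne
    have htG : t ∈ Good := (Finset.mem_filter.mp htT).1
    have htle : ((L t).filter (fun b => b < t)).card ≤ estimateF (L t).card :=
      (Finset.mem_filter.mp htT).2
    have hEt : estimateF (L t).card ≤ E := Finset.le_sup (f := fun a => estimateF (L a).card) htG
    have hsub2 : T.erase t ⊆ (L t).filter (fun b => b < t) := by
      intro s hs
      have hsT : s ∈ T := Finset.mem_of_mem_erase hs
      have hsne : s ≠ t := Finset.ne_of_mem_erase hs
      have hsG : s ∈ Good := (Finset.mem_filter.mp hsT).1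
      refine Finset.mem_filter.mpr ⟨hsub t htG hsG, ?_⟩
      exact lt_of_le_of_ne (T.le_max' s hsT) hsne
    have := Finset.card_le_card hsub2
    rw [Finset.card_erase_of_mem htT] at this
    omega
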